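/- Let T̃_m denote the number of typed search walks of length m. Then T̃_1 = 1, and for every m ≥ 2, T̃_m = Σ_{(a,b)} T̃_a · T̃_b + 4 · Σ_{k ≥ 3} Σ_{(m_1,…,m_k)} T̃_{m_1} · ⋯ · T̃_{m_k}, where the first sum ranges over all pairs (a,b) of positive integers with a + b = m − 1, and the inner sum in the second term ranges over all compositions of m − 1 into k positive parts (only finitely many summands are nonzero). -/

import Mathlib

/-- A search walk: a finite sequence of nonzero integers each at most `1`,
all of whose partial sums are at least `1`, and whose total sum is `1`. -/
def IsSearchWalk (D : List ℤ) : Prop :=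
  (∀ d ∈ D, d ≠ 0 ∧ d ≤ 1) ∧
  (∀ k, 1 ≤ k → k ≤ D.length → 1 ≤ (D.take k).sum) ∧
  D.sum = 1

/-- `Tt m` is the number of typed search walks of length `m`: pairs of a search
walk `D` of length `m` together with an assignment of a label in `{1,2,3,4}`
(here modelled as `Fin 4`) to each entry of `D` that is at most `-2` (the
assignment is recorded as the list of labels of those entries in order). -/
noncomputable def Tt (m : ℕ) : ℕ :=
  Nat.card {p : List ℤ × List (Fin 4) //
    p.1.length = m ∧ IsSearchWalk p.1 ∧
    p.2.length = (p.1.filter fun d => decide (d ≤ -2)).length}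

/-!
A search walk of length `n + 1 ≥ 2` consists of its first `n` steps `E`, a positive walk
(all partial sums `≥ 1`) ending at some height `k ≥ 2`, followed by the step `1 - k`.
Cutting `E` after its last visits to the levels `1, …, k - 1` splits it uniquely into `k`
search walks, whose lengths form a composition of `n` into `k` parts. The labels multiply
along this decomposition, and the last step carries a label (a factor `4`) iff `k ≥ 3`.
-/
def longDownCount (D : List ℤ) : ℕ := (D.filter fun d => decide (d ≤ -2)).length

lemma longDownCount_append (A B : List ℤ) :
    longDownCount (A ++ B) = longDownCount A + longDownCount B := by
  simp [longDownCount, List.filter_append]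

def IsPositiveWalk (E : List ℤ) : Prop :=
  (∀ d ∈ E, d ≠ 0 ∧ d ≤ 1) ∧ ∀ k, 1 ≤ k → k ≤ E.length → 1 ≤ (E.take k).sum

lemma isSearchWalk_iff {D : List ℤ} : IsSearchWalk D ↔ IsPositiveWalk D ∧ D.sum = 1 :=
  and_assoc.symm

lemma IsSearchWalk.ne_nil {D : List ℤ} (h : IsSearchWalk D) : D ≠ [] := by
  rintro rfl
  simpa using h.2.2

lemma isPositiveWalk_nil : IsPositiveWalk [] :=
  ⟨by simp, fun k hk hkl => by simp at hkl; omega⟩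

namespace IsPositiveWalk

variable {E : List ℤ}

lemma sum_take_le (hE : IsPositiveWalk E) (k : ℕ) : (E.take k).sum ≤ k := by
  calc (E.take k).sum ≤ (E.take k).length • (1 : ℤ) :=
        List.sum_le_card_nsmul _ _ fun d hd => (hE.1 d (List.mem_of_mem_take hd)).2
    _ ≤ k := by simp

lemma one_le_sum_of_isPrefix (hE : IsPositiveWalk E) {X : List ℤ} (hX : X <+: E)
    (hne : X ≠ []) : 1 ≤ X.sum := by
  rw [List.prefix_iff_eq_take.mp hX]
  exact hE.2 _ (List.length_pos_iff.mpr hne) hX.length_le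

lemma one_le_sum (hE : IsPositiveWalk E) (hne : E ≠ []) : 1 ≤ E.sum :=
  hE.one_le_sum_of_isPrefix List.prefix_rfl hne

lemma sum_nonneg (hE : IsPositiveWalk E) : 0 ≤ E.sum := by
  rcases eq_or_ne E [] with rfl | hne
  · simp
  · linarith [hE.one_le_sum hne]

lemma take (hE : IsPositiveWalk E) (k : ℕ) : IsPositiveWalk (E.take k) := by
  refine ⟨fun d hd => hE.1 d (List.mem_of_mem_take hd), fun j hj hjk => ?_⟩
  rw [List.take_take]
  exact hE.2 _ (by simp at hjk; omega) (by simp at hjk; omega)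

lemma append {A B : List ℤ} (hA : IsPositiveWalk A) (hA₀ : 0 ≤ A.sum)
    (hB : IsPositiveWalk B) :
    IsPositiveWalk (A ++ B) := by
  refine ⟨fun d hd => (List.mem_append.mp hd).elim (hA.1 d) (hB.1 d), fun k hk hkl => ?_⟩
  rcases le_or_gt k A.length with hkA | hkA
  · rw [List.take_append_of_le_length hkA]
    exact hA.2 k hk hkA
  · rw [List.take_append, List.take_of_length_le hkA.le, List.sum_append]
    have := hB.2 (k - A.length) (by omega) (by simp at hkl; omega)
    omega

lemma one_sub_le_getElem (hE : IsPositiveWalk E) (i : ℕ) (hi : i < E.length) :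
    1 - (i : ℤ) ≤ E[i] := by
  have := hE.2 (i + 1) (by omega) hi
  rw [List.sum_take_succ _ _ hi] at this
  linarith [hE.sum_take_le i]

end IsPositiveWalk

lemma sum_flatten_of_isSearchWalk {L : List (List ℤ)} (hL : ∀ W ∈ L, IsSearchWalk W) :
    L.flatten.sum = L.length := by
  induction L with
  | nil => simp
  | cons W L ih =>
    simp only [List.flatten_cons, List.sum_append, List.length_cons, Nat.cast_succ,
      (hL W (by simp)).2.2, ih fun V hV => hL V (by simp [hV])]
    ring

lemma isPositiveWalk_flatten {L : List (List ℤ)} (hL : ∀ W ∈ L, IsSearchWalk W) :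
    IsPositiveWalk L.flatten := by
  induction L with
  | nil => exact isPositiveWalk_nil
  | cons W L ih =>
    have hW := isSearchWalk_iff.mp (hL W (by simp))
    exact hW.1.append (by rw [hW.2]; norm_num) (ih fun V hV => hL V (by simp [hV]))

/-- If `W'` extended `W` by some `X ≠ []`, then `X` would be a nonempty prefix of the positive
walk `R`, so `W'` would end above level `1`. -/
lemma IsSearchWalk.eq_of_append_eq_append {W W' R R' : List ℤ} (hW : IsSearchWalk W)
    (hW' : IsSearchWalk W') (hR : IsPositiveWalk R) (hR' : IsPositiveWalk R')
    (h : W ++ R = W' ++ R') : W = W' := by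
  have extension_nil : ∀ {V X Y : List ℤ}, IsSearchWalk V → IsSearchWalk (V ++ X) →
      IsPositiveWalk (X ++ Y) → X = [] := fun {V X Y} hV hVX hXY => by
    by_contra hX
    have := hXY.one_le_sum_of_isPrefix (List.prefix_append X Y) hX
    have := hVX.2.2
    rw [List.sum_append, hV.2.2] at this
    omega
  rcases List.append_eq_append_iff.mp h with ⟨X, rfl, rfl⟩ | ⟨X, rfl, rfl⟩
  · simp [extension_nil hW hW' hR]
  · simp [extension_nil hW' hW hR']

lemma eq_of_flatten_eq {L L' : List (List ℤ)} (hL : ∀ W ∈ L, IsSearchWalk W)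
    (hL' : ∀ W ∈ L', IsSearchWalk W) (h : L.flatten = L'.flatten) : L = L' := by
  induction L generalizing L' with
  | nil =>
    rcases L' with _ | ⟨W', T'⟩
    · rfl
    · simp only [List.flatten_nil, List.flatten_cons, List.nil_eq_append_iff] at h
      exact absurd h.1 (hL' W' (by simp)).ne_nil
  | cons W T ih =>
    rcases L' with _ | ⟨W', T'⟩
    · simp only [List.flatten_nil, List.flatten_cons, List.append_eq_nil_iff] at h
      exact absurd h.1 (hL W (by simp)).ne_nil
    have hT : ∀ V ∈ T, IsSearchWalk V := fun V hV => hL V (by simp [hV])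
    have hT' : ∀ V ∈ T', IsSearchWalk V := fun V hV => hL' V (by simp [hV])
    simp only [List.flatten_cons] at h
    obtain rfl := (hL W (by simp)).eq_of_append_eq_append (hL' W' (by simp))
      (isPositiveWalk_flatten hT) (isPositiveWalk_flatten hT') h
    rw [ih hT hT' (List.append_cancel_left h)]

/-- Cut off the prefix ending at the last visit to level `1`; it is a search walk, and the
rest stays at level `≥ 2`, i.e. is a positive walk one level lower. -/
lemma IsPositiveWalk.exists_flatten_eq (s : ℕ) {E : List ℤ} (hE : IsPositiveWalk E)
    (hs : E.sum = s) : ∃ L : List (List ℤ), (∀ W ∈ L, IsSearchWalk W) ∧ L.length = s ∧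
      L.flatten = E := by
  induction s generalizing E with
  | zero =>
    obtain rfl : E = [] := by
      by_contra hne
      have := hE.one_le_sum hne
      simp_all
    exact ⟨[], by simp, rfl, rfl⟩
  | succ s ih =>
    have hne : E ≠ [] := by rintro rfl; simp at hs; omega
    have hlen : 1 ≤ E.length := List.length_pos_iff.mpr hne
    let P k := (E.take k).sum = 1
    have htake_one : P 1 :=
      le_antisymm (by simpa using hE.sum_take_le 1) (hE.2 1 le_rfl hlen)
    set k := Nat.findGreatest P E.length
    have hk : P k := Nat.findGreatest_spec hlen htake_one
    have hk₁ : 1 ≤ k := Nat.le_findGreatest hlen htake_one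
    have hkE : k ≤ E.length := Nat.findGreatest_le _
    have hR : IsPositiveWalk (E.drop k) := by
      refine ⟨fun d hd => hE.1 d (List.mem_of_mem_drop hd), fun j hj hjl => ?_⟩
      have hsplit := congrArg List.sum (List.take_add (l := E) (i := k) (j := j))
      have hge := hE.2 (k + j) (by omega) (by simp at hjl; omega)
      have hne1 : ¬P (k + j) :=
        Nat.findGreatest_is_greatest (n := E.length) (by omega) (by simp at hjl; omega)
      rw [List.sum_append, hk] at hsplit
      omega
    have hRsum : (E.drop k).sum = s := by
      have := congrArg List.sum (List.take_append_drop k E)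
      rw [List.sum_append, hk, hs] at this
      push_cast at this
      linarith
    obtain ⟨L, hL, hLlen, hLE⟩ := ih hR hRsum
    refine ⟨E.take k :: L, ?_, by simp [hLlen], by simp [hLE]⟩
    intro W hW
    rcases List.mem_cons.mp hW with rfl | hW
    · exact isSearchWalk_iff.mpr ⟨hE.take k, hk⟩
    · exact hL W hW

lemma isSearchWalk_append_singleton_iff {E : List ℤ} {d : ℤ} :
    IsSearchWalk (E ++ [d]) ↔ IsPositiveWalk E ∧ E.sum ≠ 1 ∧ d = 1 - E.sum := by
  have take_eq (k : ℕ) (hk : k ≤ E.length) : (E ++ [d]).take k = E.take k :=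
    List.take_append_of_le_length hk
  constructor
  · rintro ⟨hsteps, hpre, hsum⟩
    have hd : d ≠ 0 := (hsteps d (by simp)).1
    simp only [List.sum_append, List.sum_singleton] at hsum
    refine ⟨⟨fun e he => hsteps e (by simp [he]), fun k hk hkE => ?_⟩, by omega, by omega⟩
    rw [← take_eq k hkE]
    exact hpre k hk (by simp; omega)
  · rintro ⟨hE, hs, rfl⟩
    refine ⟨fun e he => ?_, fun k hk hkl => ?_, by simp⟩
    · rcases List.mem_append.mp he with he | he
      · exact hE.1 e he
      · obtain rfl := List.mem_singleton.mp he
        exact ⟨by omega, by linarith [hE.sum_nonneg]⟩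
    rcases le_or_gt k E.length with hkE | hkE
    · rw [take_eq k hkE]
      exact hE.2 k hk hkE
    · rw [List.take_of_length_le (by simp; omega)]
      simp

lemma finite_setOf_isSearchWalk (m : ℕ) :
    {D : List ℤ | D.length = m ∧ IsSearchWalk D}.Finite := by
  refine (Set.finite_range fun f : Fin m → Set.Icc (-(m : ℤ)) 1 =>
    List.ofFn fun i => (f i : ℤ)).subset ?_
  rintro D ⟨rfl, hD⟩
  refine ⟨fun i => ⟨D[(i : ℕ)], ?_, (hD.1 _ (List.getElem_mem _)).2⟩, List.ofFn_getElem⟩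
  have := (isSearchWalk_iff.mp hD).1.one_sub_le_getElem i i.2
  omega

noncomputable def searchWalks (m : ℕ) : Finset (List ℤ) :=
  (finite_setOf_isSearchWalk m).toFinset

@[simp]
lemma mem_searchWalks {m : ℕ} {D : List ℤ} :
    D ∈ searchWalks m ↔ D.length = m ∧ IsSearchWalk D := by
  simp [searchWalks]

def typedSearchWalkEquiv (m : ℕ) :
    {p : List ℤ × List (Fin 4) // p.1.length = m ∧ IsSearchWalk p.1 ∧
      p.2.length = (p.1.filter fun d => decide (d ≤ -2)).length} ≃
    Σ D : searchWalks m, List.Vector (Fin 4) (longDownCount D) where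
  toFun p := ⟨⟨p.1.1, mem_searchWalks.mpr ⟨p.2.1, p.2.2.1⟩⟩, ⟨p.1.2, p.2.2.2⟩⟩
  invFun x :=
    ⟨(x.1.1, x.2.1), (mem_searchWalks.mp x.1.2).1, (mem_searchWalks.mp x.1.2).2, x.2.2⟩
  left_inv _ := rfl
  right_inv _ := rfl

lemma Tt_eq_sum (m : ℕ) : Tt m = ∑ D ∈ searchWalks m, 4 ^ longDownCount D := by
  rw [Tt, Nat.card_congr (typedSearchWalkEquiv m), Nat.card_sigma]
  simp only [Nat.card_eq_fintype_card, card_vector, Fintype.card_fin]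
  exact Finset.sum_coe_sort (searchWalks m) fun D => 4 ^ longDownCount D

lemma searchWalks_one : searchWalks 1 = {[1]} := by
  ext D
  simp only [mem_searchWalks, Finset.mem_singleton, List.length_eq_one_iff]
  constructor
  · rintro ⟨⟨d, rfl⟩, hD⟩
    have := (isSearchWalk_append_singleton_iff (E := [])).mp hD
    simp_all
  · rintro rfl
    exact ⟨⟨1, rfl⟩, (isSearchWalk_append_singleton_iff (E := [])).mpr
      ⟨isPositiveWalk_nil, by simp, by simp⟩⟩

lemma Tt_one : Tt 1 = 1 := by
  simp [Tt_eq_sum, searchWalks_one, longDownCount]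

noncomputable def walkTuples : List ℕ → Finset (List (List ℤ))
  | [] => {[]}
  | b :: bs => (searchWalks b ×ˢ walkTuples bs).image fun p => p.1 :: p.2

lemma mem_walkTuples {bs : List ℕ} {L : List (List ℤ)} :
    L ∈ walkTuples bs ↔ (∀ W ∈ L, IsSearchWalk W) ∧ L.map List.length = bs := by
  induction bs generalizing L with
  | nil => cases L <;> simp [walkTuples]
  | cons b bs ih =>
    cases L with
    | nil => simp [walkTuples]
    | cons W L => simp [walkTuples, ih]; tauto

lemma sum_walkTuples (bs : List ℕ) :
    ∑ L ∈ walkTuples bs, 4 ^ longDownCount L.flatten = (bs.map Tt).prod := by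
  induction bs with
  | nil => simp [walkTuples, longDownCount]
  | cons b bs ih =>
    rw [walkTuples, Finset.sum_image (by rintro ⟨D, L⟩ _ ⟨D', L'⟩ _ h; simpa using h),
      Finset.sum_product, List.map_cons, List.prod_cons, Tt_eq_sum, ← ih, Finset.sum_mul_sum]
    simp [longDownCount_append, pow_add]

lemma length_eq_of_mem_walkTuples {n : ℕ} {c : Composition n} {L : List (List ℤ)}
    (h : L ∈ walkTuples c.blocks) : L.length = c.length ∧ L.flatten.length = n := by
  obtain ⟨-, hmap⟩ := mem_walkTuples.mp h
  exact ⟨by rw [Composition.length, ← hmap, List.length_map],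
    by rw [List.length_flatten, hmap, c.blocks_sum]⟩

/-- Decompositions of the first `n` steps of a search walk of length `n + 1`: a composition of
`n` with at least two parts, and search walks of the lengths given by its parts. -/
noncomputable def walkDecompositions (n : ℕ) : Finset (Σ _ : Composition n, List (List ℤ)) :=
  (Finset.univ.filter fun c : Composition n => 2 ≤ c.length).sigma fun c => walkTuples c.blocks

lemma injOn_walkDecompositions (n : ℕ) :
    Set.InjOn (fun x : Σ _ : Composition n, List (List ℤ) =>
      x.2.flatten ++ [1 - (x.1.length : ℤ)]) (walkDecompositions n) := by
  rintro ⟨c, L⟩ hx ⟨c', L'⟩ hx' h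
  simp only [walkDecompositions, Finset.coe_sigma, Set.mem_sigma_iff, Finset.coe_filter,
    Finset.mem_univ, true_and, Finset.mem_coe, mem_walkTuples] at hx hx'
  obtain ⟨hfl, -⟩ := List.append_inj' h rfl
  obtain rfl := eq_of_flatten_eq hx.2.1 hx'.2.1 hfl
  obtain rfl : c = c' := Composition.ext (hx.2.2.symm.trans hx'.2.2)
  rfl

lemma searchWalks_succ {n : ℕ} (hn : 1 ≤ n) :
    searchWalks (n + 1) = (walkDecompositions n).image fun x =>
      x.2.flatten ++ [1 - (x.1.length : ℤ)] := by
  ext D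
  simp only [Finset.mem_image, mem_searchWalks, walkDecompositions, Finset.mem_sigma,
    Finset.mem_filter, Finset.mem_univ, true_and, Sigma.exists]
  constructor
  · rintro ⟨hlen, hD⟩
    obtain ⟨E, d, rfl⟩ := (List.eq_nil_or_concat' D).resolve_left (by rintro rfl; simp at hlen)
    obtain ⟨hE, hs, rfl⟩ := isSearchWalk_append_singleton_iff.mp hD
    have hElen : E.length = n := by simpa using hlen
    have hEsum := hE.one_le_sum (List.ne_nil_of_length_pos (by omega))
    obtain ⟨L, hL, hLlen, rfl⟩ := hE.exists_flatten_eq E.sum.toNat (by omega)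
    have hpos : ∀ i ∈ L.map List.length, 0 < i := by
      intro i hi
      obtain ⟨W, hW, rfl⟩ := List.mem_map.mp hi
      exact List.length_pos_iff.mpr (hL W hW).ne_nil
    refine ⟨⟨L.map List.length, hpos _, by rw [← List.length_flatten, hElen]⟩, L,
      ⟨?_, mem_walkTuples.mpr ⟨hL, rfl⟩⟩, ?_⟩
    · simp only [Composition.length, List.length_map, hLlen]
      omega
    · simp only [Composition.length, List.length_map, hLlen]
      rw [Int.toNat_of_nonneg (by omega)]
  · rintro ⟨c, L, ⟨hc, hL⟩, rfl⟩
    have hLw := (mem_walkTuples.mp hL).1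
    obtain ⟨hLlen, hfl⟩ := length_eq_of_mem_walkTuples hL
    have hsum : L.flatten.sum = c.length := by rw [sum_flatten_of_isSearchWalk hLw, hLlen]
    refine ⟨by simp [hfl], isSearchWalk_append_singleton_iff.mpr
      ⟨isPositiveWalk_flatten hLw, by omega, by rw [hsum]⟩⟩

lemma Tt_succ {n : ℕ} (hn : 1 ≤ n) :
    Tt (n + 1) = ∑ c ∈ Finset.univ.filter fun c : Composition n => 2 ≤ c.length,
      4 ^ longDownCount [1 - (c.length : ℤ)] * (c.blocks.map Tt).prod := by
  rw [Tt_eq_sum, searchWalks_succ hn, Finset.sum_image (injOn_walkDecompositions n),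
    walkDecompositions, Finset.sum_sigma]
  refine Finset.sum_congr rfl fun c _ => ?_
  rw [← sum_walkTuples, Finset.mul_sum]
  simp only [longDownCount_append, pow_add, mul_comm]

/-- The last step `1 - k` of a search walk made of `k` blocks is a long down-step exactly
when `k ≥ 3`. -/
lemma sum_ite_length_eq_sum_longDownCount (n : ℕ) (f : Composition n → ℕ) :
    (∑ c, if c.length = 2 then f c else 0) + 4 * ∑ c, (if 3 ≤ c.length then f c else 0) =
      ∑ c ∈ Finset.univ.filter fun c : Composition n => 2 ≤ c.length,
        4 ^ longDownCount [1 - (c.length : ℤ)] * f c := by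
  rw [Finset.sum_filter, Finset.mul_sum, ← Finset.sum_add_distrib]
  refine Finset.sum_congr rfl fun c _ => ?_
  rcases lt_trichotomy c.length 2 with h | h | h
  · simp [h.ne, show ¬3 ≤ c.length by omega, show ¬2 ≤ c.length by omega]
  · simp [h, longDownCount]
  · have : (1 : ℤ) - c.length ≤ -2 := by omega
    simp [h.ne', show 3 ≤ c.length by omega, show 2 ≤ c.length by omega, longDownCount, this]

theorem typedSearchWalk_count_recurrence :
    Tt 1 = 1 ∧ ∀ m, 2 ≤ m →
      Tt m = (∑ c : Composition (m - 1),
          if c.length = 2 then (c.blocks.map Tt).prod else 0)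
        + 4 * ∑ c : Composition (m - 1),
            if 3 ≤ c.length then (c.blocks.map Tt).prod else 0 := by
  refine ⟨Tt_one, fun m hm => ?_⟩
  obtain ⟨n, rfl⟩ : ∃ n, m = n + 1 := ⟨m - 1, by omega⟩
  rw [Nat.add_sub_cancel, sum_ite_length_eq_sum_longDownCount, Tt_succ (by omega)]
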